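/- Fix θ ∈ (0,π), let Q_u = ⋂_{m∈ℤ} H_m ⊂ tildeL with H_m = {(z,α,r) ∈ tildeL : r·cos(α+mθ) ≤ 1 or |α+mθ| ≥ π/2}, and for m ∈ ℤ let E_m = {(z,α,r) ∈ tildeL : |α+mθ| < π/2 and r·cos(α+mθ) = 1}. Then the family (E_m ∩ Q_u)_{m∈ℤ} is locally finite in tildeL: every point of tildeL has a neighbourhood intersecting E_m ∩ Q_u for only finitely many m ∈ ℤ. -/
import Mathlib


open Real

/-- `tildeL = {(z,α,r) ∈ ℂ×ℝ×ℝ : 0 < r, |z| < r}`. -/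
def tL : Set (ℂ × ℝ × ℝ) := {x | 0 < x.2.2 ∧ ‖x.1‖ < x.2.2}

/-- `E_m = {(z,α,r) ∈ tildeL : |α+mθ| < π/2 and r·cos(α+mθ) = 1}`. -/
noncomputable def Em (θ : ℝ) (m : ℤ) : Set (ℂ × ℝ × ℝ) :=
  {x ∈ tL | |x.2.1 + (m : ℝ) * θ| < π / 2 ∧ x.2.2 * Real.cos (x.2.1 + (m : ℝ) * θ) = 1}

/-- `H_m = {(z,α,r) ∈ tildeL : r·cos(α+mθ) ≤ 1 or |α+mθ| ≥ π/2}`. -/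
noncomputable def Hhalf (θ : ℝ) (m : ℤ) : Set (ℂ × ℝ × ℝ) :=
  {x ∈ tL | x.2.2 * Real.cos (x.2.1 + (m : ℝ) * θ) ≤ 1 ∨ π / 2 ≤ |x.2.1 + (m : ℝ) * θ|}

/-- The prismatic set `Q_u = ⋂_{m∈ℤ} H_m`. -/
noncomputable def Qu (θ : ℝ) : Set (ℂ × ℝ × ℝ) := ⋂ m : ℤ, Hhalf θ m

theorem stmt19 (θ : ℝ) (hθ : 0 < θ) (hθπ : θ < π) :
    ∀ x ∈ tL, ∃ U ∈ nhds x, {m : ℤ | (U ∩ (Em θ m ∩ Qu θ)).Nonempty}.Finite := by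
  intro x _hx
  set α₀ := x.2.1 with hα₀
  refine ⟨(fun y : ℂ × ℝ × ℝ => y.2.1) ⁻¹' Set.Ioo (α₀ - 1) (α₀ + 1), ?_, ?_⟩
  · exact (isOpen_Ioo.preimage (continuous_fst.comp continuous_snd)).mem_nhds
      ⟨sub_lt_self _ one_pos, lt_add_one _⟩
  · set K : ℝ := (π / 2 + |α₀| + 1) / θ
    apply Set.Finite.subset (Set.finite_Icc (-⌈K⌉) ⌈K⌉)
    rintro m ⟨y, hyU, hyE, -⟩
    obtain ⟨hy1, hy2⟩ := hyU
    obtain ⟨-, habs, -⟩ := hyE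
    have h1 : |y.2.1| ≤ |α₀| + 1 := by
      have ha := le_abs_self α₀
      have hb := neg_abs_le α₀
      rw [abs_le]
      exact ⟨by linarith, by linarith⟩
    have h2 : |(m : ℝ) * θ| ≤ π / 2 + |α₀| + 1 := by
      calc |(m : ℝ) * θ| = |(y.2.1 + (m : ℝ) * θ) - y.2.1| := by ring_nf
        _ ≤ |y.2.1 + (m : ℝ) * θ| + |y.2.1| := abs_sub _ _
        _ ≤ π / 2 + (|α₀| + 1) := add_le_add habs.le h1
        _ = π / 2 + |α₀| + 1 := by ring
    have h3 : (|m| : ℝ) ≤ K := by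
      rw [abs_mul, abs_of_pos hθ] at h2
      rw [le_div_iff₀ hθ]
      simpa using h2
    have h4 : (|m| : ℝ) ≤ (⌈K⌉ : ℝ) := h3.trans (Int.le_ceil K)
    have h5 : |m| ≤ ⌈K⌉ := by exact_mod_cast h4
    exact Set.mem_Icc.mpr (abs_le.mp h5)
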